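/- arXiv:2601.09474 — 3 statements merged into one kernel-verified Lean document; each statement's English description precedes it below -/
import Mathlib

section
/- Let d ∈ ℕ, let H : ℝ^d → ℝ be continuous, let b : ℝ^d × ℝ → ℝ^d be continuous, and let λ : [0,1] → ℝ be continuous with λ(t) > 0 for all t ∈ [0,1]. Suppose J : ℝ^d × [0,1] → ℝ is continuously differentiable and satisfies the Hamilton–Jacobi–Bellman equation −∂_t J(x,t) − ⟨∇_x J(x,t), b(x,t)⟩ + ‖∇_x J(x,t)‖²/(2 λ(t)) = 0 for all x ∈ ℝ^d and t ∈ [0,1], together with the terminal condition J(x,1) = H(x) for all x. Let t₀ ∈ [0,1], let a : [t₀,1] → ℝ^d be continuous, and let X : [t₀,1] → ℝ^d be differentiable with X′(t) = b(X(t), t) + a(t) for all t ∈ [t₀,1]. Then J(X(t₀), t₀) ≤ H(X(1)) + ∫_{t₀}^{1} (λ(s)/2) ‖a(s)‖² ds. -/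
/-!
Along any admissible trajectory, the chain rule and the HJB equation give
`d/dt J(X t, t) = ⟪∇ₓJ, a⟫ + ‖∇ₓJ‖² / (2λ) ≥ -(λ/2) ‖a‖²` by Young's inequality; the drift `b`
cancels. Integrating this differential inequality from `t₀` to `1` and using `J(·, 1) = H` gives
the bound.
-/

open scoped RealInnerProductSpace
open MeasureTheory Set

section

variable {E : Type*} [NormedAddCommGroup E] [InnerProductSpace ℝ E]

theorem real_inner_add_norm_sq_div_ge (p a : E) {lam : ℝ} (hlam : 0 < lam) :
    -(lam / 2 * ‖a‖ ^ 2) ≤ ⟪p, a⟫ + ‖p‖ ^ 2 / (2 * lam) := by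
  have hinner : -(‖p‖ * ‖a‖) ≤ ⟪p, a⟫ := neg_le_of_abs_le (abs_real_inner_le_norm p a)
  have hyoung : ‖p‖ * ‖a‖ - lam / 2 * ‖a‖ ^ 2 ≤ ‖p‖ ^ 2 / (2 * lam) := by
    rw [le_div_iff₀ (by positivity)]
    nlinarith [sq_nonneg (‖p‖ - lam * ‖a‖)]
  linarith

variable [CompleteSpace E]

theorem fderiv_prod_apply_eq_inner_gradient_add {J : E × ℝ → ℝ} {x : E} {t : ℝ}
    (hJ : DifferentiableAt ℝ J (x, t)) (v : E) (s : ℝ) :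
    fderiv ℝ J (x, t) (v, s)
      = ⟪gradient (fun y => J (y, t)) x, v⟫ + s * deriv (fun τ => J (x, τ)) t := by
  set f := fderiv ℝ J (x, t)
  have hgrad : gradient (fun y => J (y, t)) x
      = (InnerProductSpace.toDual ℝ E).symm (f.comp (ContinuousLinearMap.inl ℝ E ℝ)) :=
    (hJ.hasFDerivAt.comp x (hasFDerivAt_prodMk_left x t)).hasGradientAt.gradient
  have hderiv : deriv (fun τ => J (x, τ)) t = f (0, 1) :=
    (hJ.hasFDerivAt.comp_hasDerivAt t ((hasDerivAt_const t x).prodMk (hasDerivAt_id t))).deriv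
  have hsplit : ((v, s) : E × ℝ) = (v, 0) + s • (0, 1) := by simp
  rw [hgrad, InnerProductSpace.toDual_symm_apply, hderiv, hsplit, map_add, map_smul]
  simp

theorem hasDerivAt_comp_graph {J : E × ℝ → ℝ} {X : ℝ → E} {v : E} {t : ℝ}
    (hJ : DifferentiableAt ℝ J (X t, t)) (hX : HasDerivAt X v t) :
    HasDerivAt (fun s => J (X s, s))
      (⟪gradient (fun y => J (y, t)) (X t), v⟫ + deriv (fun τ => J (X t, τ)) t) t := by
  have h := hJ.hasFDerivAt.comp_hasDerivAt (f := fun s => (X s, s)) t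
    (hX.prodMk (hasDerivAt_id t))
  rwa [fderiv_prod_apply_eq_inner_gradient_add hJ, one_mul] at h

theorem exists_hasDerivAt_comp_graph_ge_of_hjb {J : E × ℝ → ℝ} {X : ℝ → E} {b a : E}
    {t lam : ℝ} (hJ : DifferentiableAt ℝ J (X t, t)) (hX : HasDerivAt X (b + a) t)
    (hlam : 0 < lam)
    (hHJB : -(deriv (fun τ => J (X t, τ)) t) - ⟪gradient (fun y => J (y, t)) (X t), b⟫
      + ‖gradient (fun y => J (y, t)) (X t)‖ ^ 2 / (2 * lam) = 0) :
    ∃ D, HasDerivAt (fun s => J (X s, s)) D t ∧ -(lam / 2 * ‖a‖ ^ 2) ≤ D := by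
  refine ⟨_, hasDerivAt_comp_graph hJ hX, ?_⟩
  have hyoung := real_inner_add_norm_sq_div_ge (gradient (fun y => J (y, t)) (X t)) a hlam
  rw [inner_add_right]
  linarith

end

theorem le_add_integral_of_forall_hasDerivAt_ge {f φ : ℝ → ℝ} {a b : ℝ} (hab : a ≤ b)
    (hf : ∀ t ∈ Icc a b, ∃ D, HasDerivAt f D t ∧ -φ t ≤ D) (hφ : IntegrableOn φ (Icc a b)) :
    f a ≤ f b + ∫ s in a..b, φ s := by
  choose! D hD hDφ using hf
  have hcont : ContinuousOn (fun s => -f s) (Icc a b) :=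
    fun t ht => (hD t ht).continuousAt.neg.continuousWithinAt
  have key := intervalIntegral.sub_le_integral_of_hasDeriv_right_of_le hab hcont
    (fun t ht => (hD t (Ioo_subset_Icc_self ht)).neg.hasDerivWithinAt) hφ
    (fun t ht => neg_le.mp (hDφ t (Ioo_subset_Icc_self ht)))
  linarith

theorem hjb_verification_lower_bound_general
    (d : ℕ)
    (H : EuclideanSpace ℝ (Fin d) → ℝ)
    (b : EuclideanSpace ℝ (Fin d) × ℝ → EuclideanSpace ℝ (Fin d))
    (lam : ℝ → ℝ) (hlamc : ContinuousOn lam (Icc 0 1))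
    (hlam : ∀ t ∈ Icc (0:ℝ) 1, 0 < lam t)
    (J : EuclideanSpace ℝ (Fin d) × ℝ → ℝ) (hJ : ContDiff ℝ 1 J)
    (hHJB : ∀ x, ∀ t ∈ Icc (0:ℝ) 1,
      -(deriv (fun τ => J (x, τ)) t)
        - ⟪gradient (fun y => J (y, t)) x, b (x, t)⟫
        + ‖gradient (fun y => J (y, t)) x‖ ^ 2 / (2 * lam t) = 0)
    (hterm : ∀ x, J (x, 1) = H x)
    (t₀ : ℝ) (ht₀ : t₀ ∈ Icc (0:ℝ) 1)
    (a : ℝ → EuclideanSpace ℝ (Fin d)) (ha : ContinuousOn a (Icc t₀ 1))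
    (X : ℝ → EuclideanSpace ℝ (Fin d))
    (hX : ∀ t ∈ Icc t₀ 1, HasDerivAt X (b (X t, t) + a t) t) :
    J (X t₀, t₀) ≤ H (X 1) + ∫ s in t₀..1, lam s / 2 * ‖a s‖ ^ 2 := by
  have hsub : Icc t₀ 1 ⊆ Icc 0 1 := Icc_subset_Icc_left ht₀.1
  have hcost : IntegrableOn (fun s => lam s / 2 * ‖a s‖ ^ 2) (Icc t₀ 1) :=
    (((hlamc.mono hsub).div_const 2).mul (ha.norm.pow 2)).integrableOn_Icc
  rw [← hterm]
  refine le_add_integral_of_forall_hasDerivAt_ge (f := fun s => J (X s, s)) ht₀.2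
    (fun t ht => ?_) hcost
  exact exists_hasDerivAt_comp_graph_ge_of_hjb (hJ.differentiable one_ne_zero _) (hX t ht)
    (hlam t (hsub ht)) (hHJB (X t) t (hsub ht))

theorem hjb_verification_lower_bound
    (d : ℕ)
    (H : EuclideanSpace ℝ (Fin d) → ℝ) (hH : Continuous H)
    (b : EuclideanSpace ℝ (Fin d) × ℝ → EuclideanSpace ℝ (Fin d)) (hb : Continuous b)
    (lam : ℝ → ℝ) (hlamc : ContinuousOn lam (Icc 0 1))
    (hlam : ∀ t ∈ Icc (0:ℝ) 1, 0 < lam t)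
    (J : EuclideanSpace ℝ (Fin d) × ℝ → ℝ) (hJ : ContDiff ℝ 1 J)
    (hHJB : ∀ x, ∀ t ∈ Icc (0:ℝ) 1,
      -(deriv (fun τ => J (x, τ)) t)
        - ⟪gradient (fun y => J (y, t)) x, b (x, t)⟫
        + ‖gradient (fun y => J (y, t)) x‖ ^ 2 / (2 * lam t) = 0)
    (hterm : ∀ x, J (x, 1) = H x)
    (t₀ : ℝ) (ht₀ : t₀ ∈ Icc (0:ℝ) 1)
    (a : ℝ → EuclideanSpace ℝ (Fin d)) (ha : ContinuousOn a (Icc t₀ 1))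
    (X : ℝ → EuclideanSpace ℝ (Fin d))
    (hX : ∀ t ∈ Icc t₀ 1, HasDerivAt X (b (X t, t) + a t) t) :
    J (X t₀, t₀) ≤ H (X 1) + ∫ s in t₀..1, lam s / 2 * ‖a s‖ ^ 2 :=
  hjb_verification_lower_bound_general d H b lam hlamc hlam J hJ hHJB hterm t₀ ht₀ a ha X hX
end

section
/- Let d ∈ ℕ and let b : ℝ^d × ℝ → ℝ^d. For each t ∈ [0,1] let Φ_t : ℝ^d → ℝ^d (the flow map of b from time t to time 1), such that (x,t) ↦ Φ_t(x) is continuously differentiable and satisfies the advection equation ∂_t Φ_t(x) + DΦ_t(x) b(x,t) = 0 for all x ∈ ℝ^d and t ∈ [0,1], where DΦ_t(x) is the spatial Jacobian matrix. Let λ : [0,1] → ℝ be continuous with λ(t) > 0, and set s(t) = ∫_t^1 λ(u)⁻¹ du. Let J : ℝ^d × [0,1] → ℝ be continuously differentiable and satisfy the Hamilton–Jacobi–Bellman equation −∂_t J(x,t) − ⟨∇_x J(x,t), b(x,t)⟩ + ‖∇_x J(x,t)‖²/(2λ(t)) = 0 for all x and t ∈ [0,1]. Let Ĵ : ℝ^d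 × ℝ → ℝ be continuously differentiable with J(x,t) = Ĵ(Φ_t(x), s(t)) for all x ∈ ℝ^d and t ∈ [0,1]. Then for all x ∈ ℝ^d and t ∈ [0,1]: (i) ∇_x J(x,t) = DΦ_t(x)ᵀ ∇_y Ĵ(Φ_t(x), s(t)); and (ii) ∂_s Ĵ(Φ_t(x), s(t)) + (1/2) ⟨∇_y Ĵ(Φ_t(x), s(t)), DΦ_t(x) DΦ_t(x)ᵀ ∇_y Ĵ(Φ_t(x), s(t))⟩ = 0. -/
open scoped RealInnerProductSpace
open Set

/-!
Write `y = Φ_t x`, `A = DΦ_t(x)` and `g = ∇_y Ĵ(y, s(t))`. Differentiating `J(x, t) = Ĵ(Φ_t x, s(t))`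
in `x` gives `∇_x J = Aᵀ g`. Differentiating it in `t`, the advection equation turns
`∂_t Φ_t x` into `-A b`, and `s' = -λ⁻¹`, so `∂_t J = -⟪∇_x J, b⟫ - λ⁻¹ ∂_s Ĵ`. Substituting this into
the HJB equation cancels the drift term and leaves `λ⁻¹ (∂_s Ĵ + ½ ‖Aᵀ g‖²) = 0`.
-/

section Calculus

variable {E F : Type*} [NormedAddCommGroup E] [InnerProductSpace ℝ E] [CompleteSpace E]
  [NormedAddCommGroup F] [InnerProductSpace ℝ F] [CompleteSpace F]

theorem gradient_comp_eq_adjoint {f : F → ℝ} {φ : E → F} {x : E}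
    (hf : DifferentiableAt ℝ f (φ x)) (hφ : DifferentiableAt ℝ φ x) :
    gradient (fun y => f (φ y)) x
      = ContinuousLinearMap.adjoint (fderiv ℝ φ x) (gradient f (φ x)) := by
  refine ext_inner_right ℝ fun v => ?_
  rw [inner_gradient_left, fderiv_fun_comp x hf hφ, ContinuousLinearMap.comp_apply,
    ContinuousLinearMap.adjoint_inner_left, inner_gradient_left]

theorem DifferentiableAt.fderiv_apply_eq_inner_gradient_add {f : E × ℝ → ℝ} {p : E × ℝ}
    (hf : DifferentiableAt ℝ f p) (v : E) (c : ℝ) :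
    fderiv ℝ f p (v, c)
      = ⟪gradient (fun y => f (y, p.2)) p.1, v⟫ + c * deriv (fun σ => f (p.1, σ)) p.2 := by
  have hspace : HasFDerivAt (fun y => f (y, p.2))
      ((fderiv ℝ f p).comp (ContinuousLinearMap.inl ℝ E ℝ)) p.1 :=
    hf.hasFDerivAt.comp p.1 (hasFDerivAt_prodMk_left p.1 p.2)
  have htime : HasDerivAt (fun σ => f (p.1, σ)) (fderiv ℝ f p (0, 1)) p.2 :=
    hf.hasFDerivAt.comp_hasDerivAt p.2 ((hasDerivAt_const p.2 p.1).prodMk (hasDerivAt_id p.2))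
  have hsplit : ((v, c) : E × ℝ) = (v, 0) + c • (0, 1) := by simp
  rw [inner_gradient_left, hspace.fderiv, htime.deriv, hsplit, map_add, map_smul, smul_eq_mul]
  rfl

theorem DifferentiableAt.hasDerivWithinAt_comp_prodMk {f : E × ℝ → ℝ} {γ : ℝ → E} {σ : ℝ → ℝ}
    {γ' : E} {σ' t : ℝ} {S : Set ℝ} (hf : DifferentiableAt ℝ f (γ t, σ t))
    (hγ : HasDerivWithinAt γ γ' S t) (hσ : HasDerivWithinAt σ σ' S t) :
    HasDerivWithinAt (fun τ => f (γ τ, σ τ))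
      (⟪gradient (fun y => f (y, σ t)) (γ t), γ'⟫ + σ' * deriv (fun σ₀ => f (γ t, σ₀)) (σ t))
      S t := by
  rw [← hf.fderiv_apply_eq_inner_gradient_add]
  exact hf.hasFDerivAt.comp_hasDerivWithinAt t (hγ.prodMk hσ)

end Calculus

theorem ContinuousOn.hasDerivWithinAt_integral_left {E : Type*} [NormedAddCommGroup E]
    [NormedSpace ℝ E] [CompleteSpace E] {f : ℝ → E} {a b t : ℝ}
    (hf : ContinuousOn f (Icc a b)) (ht : t ∈ Icc a b) :
    HasDerivWithinAt (fun u => ∫ x in u..b, f x) (-f t) (Icc a b) t := by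
  have : Fact (t ∈ Icc a b) := ⟨ht⟩
  have hsub : uIcc t b ⊆ Icc a b := by
    rw [uIcc_of_le ht.2]
    exact Icc_subset_Icc_left ht.1
  exact intervalIntegral.integral_hasDerivWithinAt_left ((hf.mono hsub).intervalIntegrable)
    (hf.stronglyMeasurableAtFilter_nhdsWithin measurableSet_Icc t) (hf t ht)

theorem DifferentiableAt.deriv_eq_of_eqOn {E : Type*} [NormedAddCommGroup E] [NormedSpace ℝ E]
    {f g : ℝ → E} {g' : E} {t : ℝ} {S : Set ℝ}
    (hf : DifferentiableAt ℝ f t) (hS : UniqueDiffWithinAt ℝ S t) (hfg : EqOn f g S) (ht : t ∈ S)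
    (hg : HasDerivWithinAt g g' S t) : deriv f t = g' :=
  hS.eq_deriv S hf.hasDerivAt.hasDerivWithinAt (hg.congr hfg (hfg ht))

theorem hjb_terminal_comoving_frame
    (d : ℕ)
    (b : EuclideanSpace ℝ (Fin d) × ℝ → EuclideanSpace ℝ (Fin d))
    (Φ : ℝ → EuclideanSpace ℝ (Fin d) → EuclideanSpace ℝ (Fin d))
    (hΦ : ContDiff ℝ 1 (fun q : EuclideanSpace ℝ (Fin d) × ℝ => Φ q.2 q.1))
    (hadv : ∀ x, ∀ t ∈ Icc (0:ℝ) 1,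
      deriv (fun τ => Φ τ x) t + fderiv ℝ (Φ t) x (b (x, t)) = 0)
    (lam : ℝ → ℝ) (hlamc : ContinuousOn lam (Icc 0 1))
    (hlam : ∀ t ∈ Icc (0:ℝ) 1, 0 < lam t)
    (s : ℝ → ℝ) (hs : ∀ t, s t = ∫ u in t..(1:ℝ), (lam u)⁻¹)
    (J : EuclideanSpace ℝ (Fin d) × ℝ → ℝ) (hJ : ContDiff ℝ 1 J)
    (hHJB : ∀ x, ∀ t ∈ Icc (0:ℝ) 1,
      -(deriv (fun τ => J (x, τ)) t)
        - ⟪gradient (fun y => J (y, t)) x, b (x, t)⟫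
        + ‖gradient (fun y => J (y, t)) x‖ ^ 2 / (2 * lam t) = 0)
    (Jh : EuclideanSpace ℝ (Fin d) × ℝ → ℝ) (hJh : ContDiff ℝ 1 Jh)
    (hcomp : ∀ x, ∀ t ∈ Icc (0:ℝ) 1, J (x, t) = Jh (Φ t x, s t)) :
    ∀ x, ∀ t ∈ Icc (0:ℝ) 1,
      gradient (fun y => J (y, t)) x
        = ContinuousLinearMap.adjoint (fderiv ℝ (Φ t) x)
            (gradient (fun y => Jh (y, s t)) (Φ t x)) ∧
      deriv (fun τ => Jh (Φ t x, τ)) (s t)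
        + 1 / 2 * ⟪gradient (fun y => Jh (y, s t)) (Φ t x),
            (fderiv ℝ (Φ t) x) (ContinuousLinearMap.adjoint (fderiv ℝ (Φ t) x)
              (gradient (fun y => Jh (y, s t)) (Φ t x)))⟫ = 0 := by
  intro x t ht
  set A := fderiv ℝ (Φ t) x
  set g := gradient (fun y => Jh (y, s t)) (Φ t x)
  have hΦd := hΦ.differentiable one_ne_zero
  have hJhd := hJh.differentiable one_ne_zero
  have hgrad : gradient (fun y => J (y, t)) x = ContinuousLinearMap.adjoint A g := by
    rw [show (fun y => J (y, t)) = fun y => Jh (Φ t y, s t) from funext fun y => hcomp y t ht]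
    exact gradient_comp_eq_adjoint (f := fun y => Jh (y, s t)) (by fun_prop)
      (hΦd.comp (differentiable_id.prodMk (differentiable_const t)) x)
  refine ⟨hgrad, ?_⟩
  have hs' : HasDerivWithinAt s (-(lam t)⁻¹) (Icc 0 1) t := by
    rw [funext hs]
    exact (hlamc.inv₀ fun u hu => (hlam u hu).ne').hasDerivWithinAt_integral_left ht
  have hΦ' : HasDerivWithinAt (fun τ => Φ τ x) (-A (b (x, t))) (Icc 0 1) t := by
    rw [← eq_neg_of_add_eq_zero_left (hadv x t ht)]
    exact (hΦd.comp ((differentiable_const x).prodMk differentiable_id) t).hasDerivAt.hasDerivWithinAt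
  have hdt : deriv (fun τ => J (x, τ)) t
      = ⟪g, -A (b (x, t))⟫ + -(lam t)⁻¹ * deriv (fun σ => Jh (Φ t x, σ)) (s t) :=
    DifferentiableAt.deriv_eq_of_eqOn (hJ.differentiable one_ne_zero |>.comp
        ((differentiable_const x).prodMk differentiable_id) t)
      (uniqueDiffOn_Icc one_pos t ht) (fun τ hτ => hcomp x τ hτ) ht
      ((hJhd _).hasDerivWithinAt_comp_prodMk hΦ' hs')
  have hdrift : ⟪gradient (fun y => J (y, t)) x, b (x, t)⟫ = ⟪g, A (b (x, t))⟫ := by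
    rw [hgrad, ContinuousLinearMap.adjoint_inner_left]
  have hnorm : ‖gradient (fun y => J (y, t)) x‖ ^ 2 = ⟪g, A (ContinuousLinearMap.adjoint A g)⟫ := by
    rw [← real_inner_self_eq_norm_sq, hgrad, ContinuousLinearMap.adjoint_inner_left]
  have hHJBt := hHJB x t ht
  rw [hdt, hdrift, hnorm, inner_neg_right] at hHJBt
  have hlam0 := (hlam t ht).ne'
  field_simp at hHJBt
  linarith
end

section
/- Let σ > 0 and let λ : [0,1] → ℝ be continuous with λ(t) > 0 for all t ∈ [0,1]. Define v : [0,1] → ℝ by v(t) = sqrt((1−t)² + t²σ²) (so v(t) > 0 for all t), α(t) = v′(t)/v(t), and P : [0,1] → ℝ by P(t) = ( v(t)² ( σ⁻² + ∫_t^1 (λ(u) v(u)²)⁻¹ du ) )⁻¹. Then P is differentiable on [0,1], P(1) = 1, and P satisfies the Riccati equation −(1/2) P′(t) − α(t) P(t) + P(t)²/(2 λ(t)) = 0 for all t ∈ [0,1]. -/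
/-!
The substitution `P = 1 / h` turns the Riccati equation into the linear equation
`h' = 2 α h - 1 / λ`. Since `α = v' / v`, variation of constants gives `h = v² g` with
`g' = -1 / (λ v²)`, and `g t = σ⁻² + ∫_t^1 (λ v²)⁻¹` is the solution with `h 1 = 1`.
It stays positive because the integrand does.
-/

open Set

theorem one_sub_sq_add_sq_mul_sq_pos {σ : ℝ} (hσ : σ ≠ 0) (t : ℝ) :
    0 < (1 - t) ^ 2 + t ^ 2 * σ ^ 2 := by
  rcases eq_or_ne t 0 with rfl | ht
  · norm_num
  · positivity

theorem ContinuousOn.hasDerivWithinAt_integral_Icc_left {E : Type*} [NormedAddCommGroup E]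
    [NormedSpace ℝ E] [CompleteSpace E] {f : ℝ → E} {a b t : ℝ}
    (hf : ContinuousOn f (Icc a b)) (ht : t ∈ Icc a b) :
    HasDerivWithinAt (fun x => ∫ u in x..b, f u) (-f t) (Icc a b) t :=
  have : Fact (t ∈ Icc a b) := ⟨ht⟩
  intervalIntegral.integral_hasDerivWithinAt_left
    ((hf.mono (uIcc_subset_Icc ht (right_mem_Icc.2 (ht.1.trans ht.2)))).intervalIntegrable)
    (hf.stronglyMeasurableAtFilter_nhdsWithin measurableSet_Icc t) (hf.continuousWithinAt ht)

theorem riccati_inv_of_linear {H H' a l : ℝ} (hH : H ≠ 0) (hlin : H' = 2 * a * H - l⁻¹) :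
    -(1 / 2) * (-H' / H ^ 2) - a * H⁻¹ + H⁻¹ ^ 2 / (2 * l) = 0 := by
  subst hlin
  field_simp
  ring

theorem HasDerivWithinAt.sq_mul_of_deriv_eq_neg_inv {v g : ℝ → ℝ} {s : Set ℝ}
    {t v' l : ℝ} (hv : HasDerivWithinAt v v' s t)
    (hg : HasDerivWithinAt g (-(l * v t ^ 2)⁻¹) s t) (hvt : v t ≠ 0) :
    HasDerivWithinAt (fun x => v x ^ 2 * g x) (2 * (v' / v t) * (v t ^ 2 * g t) - l⁻¹) s t := by
  refine ((hv.fun_pow 2).fun_mul hg).congr_deriv ?_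
  field_simp
  ring

theorem riccati_explicit_solution
    (σ : ℝ) (hσ : 0 < σ)
    (lam : ℝ → ℝ) (hlamc : ContinuousOn lam (Icc 0 1))
    (hlam : ∀ t ∈ Icc (0:ℝ) 1, 0 < lam t)
    (v α P : ℝ → ℝ)
    (hv : ∀ t, v t = Real.sqrt ((1 - t) ^ 2 + t ^ 2 * σ ^ 2))
    (hα : ∀ t, α t = deriv v t / v t)
    (hP : ∀ t, P t = (v t ^ 2 * ((σ ^ 2)⁻¹ + ∫ u in t..(1:ℝ), (lam u * v u ^ 2)⁻¹))⁻¹) :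
    P 1 = 1 ∧ DifferentiableOn ℝ P (Icc 0 1) ∧
    ∀ t ∈ Icc (0:ℝ) 1,
      -(1 / 2) * derivWithin P (Icc 0 1) t - α t * P t + P t ^ 2 / (2 * lam t) = 0 := by
  have hvpos : ∀ t, 0 < v t := fun t =>
    hv t ▸ Real.sqrt_pos.2 (one_sub_sq_add_sq_mul_sq_pos hσ.ne' t)
  have hvdiff : Differentiable ℝ v := funext hv ▸
    (by fun_prop : Differentiable ℝ fun t : ℝ => (1 - t) ^ 2 + t ^ 2 * σ ^ 2).sqrt
      fun t => (one_sub_sq_add_sq_mul_sq_pos hσ.ne' t).ne'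
  set f : ℝ → ℝ := fun u => (lam u * v u ^ 2)⁻¹
  set g : ℝ → ℝ := fun t => (σ ^ 2)⁻¹ + ∫ u in t..(1:ℝ), f u
  have hden : ∀ u ∈ Icc (0:ℝ) 1, 0 < lam u * v u ^ 2 := fun u hu =>
    mul_pos (hlam u hu) (pow_pos (hvpos u) 2)
  have hgpos : ∀ t ∈ Icc (0:ℝ) 1, 0 < g t := fun t ht =>
    add_pos_of_pos_of_nonneg (by positivity) (intervalIntegral.integral_nonneg ht.2
      fun u hu => (inv_pos.2 (hden u ⟨ht.1.trans hu.1, hu.2⟩)).le)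
  have hfc : ContinuousOn f (Icc 0 1) :=
    (hlamc.mul (hvdiff.continuous.pow 2).continuousOn).inv₀ fun u hu => (hden u hu).ne'
  have hh : ∀ t ∈ Icc (0:ℝ) 1, HasDerivWithinAt (fun x => v x ^ 2 * g x)
      (2 * α t * (v t ^ 2 * g t) - (lam t)⁻¹) (Icc 0 1) t := fun t ht => hα t ▸
    (hvdiff t).hasDerivAt.hasDerivWithinAt.sq_mul_of_deriv_eq_neg_inv
      ((hfc.hasDerivWithinAt_integral_Icc_left ht).const_add _) (hvpos t).ne'
  have hhne : ∀ t ∈ Icc (0:ℝ) 1, v t ^ 2 * g t ≠ 0 := fun t ht =>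
    (mul_pos (pow_pos (hvpos t) 2) (hgpos t ht)).ne'
  have hPd : ∀ t ∈ Icc (0:ℝ) 1, HasDerivWithinAt P
      (-(2 * α t * (v t ^ 2 * g t) - (lam t)⁻¹) / (v t ^ 2 * g t) ^ 2) (Icc 0 1) t :=
    fun t ht => ((hh t ht).inv (hhne t ht)).congr (fun x _ => hP x) (hP t)
  refine ⟨?_, fun t ht => (hPd t ht).differentiableWithinAt, fun t ht => ?_⟩
  · have hv1 : v 1 = σ := by rw [hv]; norm_num [hσ.le]
    simp [hP, hv1, hσ.ne']
  · rw [(hPd t ht).derivWithin ((uniqueDiffOn_Icc one_pos) t ht), hP]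
    exact riccati_inv_of_linear (hhne t ht) rfl
end
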